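/- Fix N ≥ 1. Let P be a probability distribution over variables (a1,a2,a3,b,x1,x2,x3,y,λ) where a1,a2,a3,b,x1,x2,λ are binary and x3,y take values in {0,1,…,N}, satisfying: (i) P(x1,x2,x3,y) > 0 for all input values; (ii) λ ⫫_P (x1,x2,x3,y); (iii) (λ,b) ⫫_P (x1,x2,x3) | y, (λ,a1,a2,a3) ⫫_P y | (x1,x2,x3), and (λ,a1,a2) ⫫_P (x3,y) | (x1,x2). Define the conditional distribution R_P(a,b,λ | x3,y) := P(a1=a, b, λ | x1=x2=1, x3, y) if x3 = 0 and R_P(a,b,λ | x3,y) := P(a3=a, b, λ | x1=x2=0, x3, y) if x3 ≠ 0. Then R_P satisfies measurement independence and parameter independence: λ ⫫_{R_P} (x3,y), a ⫫_{R_P} y | (x3,λ), and b ⫫_{R_P} x3 | (y,λ), where independence for the conditional distribution R_P means that the corresponding conditional probabilities do not depend on the omitted input. -/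
import Mathlib


set_option synthInstance.maxSize 100000
set_option maxHeartbeats 1000000

/-- A configuration of the single-switch Braunstein–Caves scenario:
binary variables `a1, a2, a3, b, x1, x2, λ` and `x3, y ∈ {0, 1, …, N}`. -/
structure Cfg (N : ℕ) where
  a1 : Bool
  a2 : Bool
  a3 : Bool
  b : Bool
  x1 : Bool
  x2 : Bool
  x3 : Fin (N + 1)
  y : Fin (N + 1)
  lam : Bool
deriving DecidableEq, Fintype

/-- The probability of the event `E` under the distribution `P`. -/
def pr {N : ℕ} (P : Cfg N → ℝ) (E : Cfg N → Prop) [DecidablePred E] : ℝ :=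
  ∑ c : Cfg N, if E c then P c else 0

/-- The conditional probability `P(E | F) = P(E ∧ F) / P(F)`. -/
noncomputable def cpr {N : ℕ} (P : Cfg N → ℝ) (E F : Cfg N → Prop)
    [DecidablePred E] [DecidablePred F] : ℝ :=
  pr P (fun c => E c ∧ F c) / pr P F

/-- The conditional distribution `R_P(a, b, λ | x3, y)`:
`P(a1=a, b, λ | x1=x2=1, x3, y)` for `x3 = 0` and
`P(a3=a, b, λ | x1=x2=0, x3, y)` for `x3 ≠ 0`. -/
noncomputable def R {N : ℕ} (P : Cfg N → ℝ) (a b l : Bool) (x3 y : Fin (N + 1)) : ℝ :=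
  if x3 = 0 then
    cpr P (fun c => c.a1 = a ∧ c.b = b ∧ c.lam = l)
      (fun c => c.x1 = true ∧ c.x2 = true ∧ c.x3 = x3 ∧ c.y = y)
  else
    cpr P (fun c => c.a3 = a ∧ c.b = b ∧ c.lam = l)
      (fun c => c.x1 = false ∧ c.x2 = false ∧ c.x3 = x3 ∧ c.y = y)

/-- The marginal `R_P(λ | x3, y)`. -/
noncomputable def Rlam {N : ℕ} (P : Cfg N → ℝ) (l : Bool) (x3 y : Fin (N + 1)) : ℝ :=
  ∑ a : Bool, ∑ b : Bool, R P a b l x3 y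

/-- The marginal `R_P(a, λ | x3, y)`. -/
noncomputable def Ralam {N : ℕ} (P : Cfg N → ℝ) (a l : Bool) (x3 y : Fin (N + 1)) : ℝ :=
  ∑ b : Bool, R P a b l x3 y

/-- The marginal `R_P(b, λ | x3, y)`. -/
noncomputable def Rblam {N : ℕ} (P : Cfg N → ℝ) (b l : Bool) (x3 y : Fin (N + 1)) : ℝ :=
  ∑ a : Bool, R P a b l x3 y

section Helpers

variable {N : ℕ}

lemma pr_congr (P : Cfg N → ℝ) (E F : Cfg N → Prop) [DecidablePred E] [DecidablePred F]
    (h : ∀ c, E c ↔ F c) : pr P E = pr P F := by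
  unfold pr
  exact Finset.sum_congr rfl fun c _ => by simp only [h c]

lemma pr_mono (P : Cfg N → ℝ) (hnn : ∀ c, 0 ≤ P c) (E F : Cfg N → Prop)
    [DecidablePred E] [DecidablePred F] (h : ∀ c, E c → F c) : pr P E ≤ pr P F := by
  unfold pr
  refine Finset.sum_le_sum fun c _ => ?_
  by_cases hE : E c
  · simp [hE, h c hE]
  · by_cases hF : F c <;> simp [hE, hF, hnn c]

lemma pr_sum_bool (P : Cfg N → ℝ) (f : Cfg N → Bool) (E : Bool → Cfg N → Prop)
    [∀ v, DecidablePred (E v)] (Q : Cfg N → Prop) [DecidablePred Q]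
    (h : ∀ v c, E v c ↔ (f c = v ∧ Q c)) :
    ∑ v : Bool, pr P (E v) = pr P Q := by
  unfold pr
  rw [Finset.sum_comm]
  refine Finset.sum_congr rfl fun c _ => ?_
  rw [Fintype.sum_bool]
  by_cases hQ : Q c
  · cases hfc : f c <;> simp [h, hfc, hQ]
  · simp [h, hQ]

lemma cpr_sum_b (P : Cfg N → ℝ) (g : Cfg N → Bool) (a l : Bool) (F : Cfg N → Prop)
    [DecidablePred F] :
    ∑ b : Bool, cpr P (fun c => g c = a ∧ c.b = b ∧ c.lam = l) F
      = pr P (fun c => c.lam = l ∧ g c = a ∧ F c) / pr P F := by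
  simp only [cpr]
  rw [← Finset.sum_div]
  congr 1
  exact pr_sum_bool P (fun c => c.b)
    (fun b c => (g c = a ∧ c.b = b ∧ c.lam = l) ∧ F c)
    (fun c => c.lam = l ∧ g c = a ∧ F c) (fun b c => by tauto)

lemma cpr_sum_a (P : Cfg N → ℝ) (g : Cfg N → Bool) (b l : Bool) (F : Cfg N → Prop)
    [DecidablePred F] :
    ∑ a : Bool, cpr P (fun c => g c = a ∧ c.b = b ∧ c.lam = l) F
      = pr P (fun c => c.lam = l ∧ c.b = b ∧ F c) / pr P F := by
  simp only [cpr]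
  rw [← Finset.sum_div]
  congr 1
  exact pr_sum_bool P g
    (fun a c => (g c = a ∧ c.b = b ∧ c.lam = l) ∧ F c)
    (fun c => c.lam = l ∧ c.b = b ∧ F c) (fun a c => by tauto)

lemma cpr_sum_ab (P : Cfg N → ℝ) (g : Cfg N → Bool) (l : Bool) (F : Cfg N → Prop)
    [DecidablePred F] :
    ∑ a : Bool, ∑ b : Bool, cpr P (fun c => g c = a ∧ c.b = b ∧ c.lam = l) F
      = pr P (fun c => c.lam = l ∧ F c) / pr P F := by
  rw [Finset.sum_congr rfl (fun a _ => cpr_sum_b P g a l F), ← Finset.sum_div]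
  congr 1
  exact pr_sum_bool P g
    (fun a c => c.lam = l ∧ g c = a ∧ F c)
    (fun c => c.lam = l ∧ F c) (fun a c => by tauto)

/-- The computation of the marginals of `R` on one branch of its definition. -/
lemma aux_branch (P : Cfg N → ℝ) (hnn : ∀ c, 0 ≤ P c)
    (g : Cfg N → Bool) (u : Bool) (x3 : Fin (N + 1))
    (hR : ∀ (a b l : Bool) (y : Fin (N + 1)),
      R P a b l x3 y = cpr P (fun c => g c = a ∧ c.b = b ∧ c.lam = l)
        (fun c => c.x1 = u ∧ c.x2 = u ∧ c.x3 = x3 ∧ c.y = y))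
    (hin : ∀ y : Fin (N + 1),
      0 < pr P (fun c => c.x1 = u ∧ c.x2 = u ∧ c.x3 = x3 ∧ c.y = y))
    (hfree : ∀ (l : Bool) (y : Fin (N + 1)),
      pr P (fun c => c.lam = l ∧ c.x1 = u ∧ c.x2 = u ∧ c.x3 = x3 ∧ c.y = y)
        = pr P (fun c => c.lam = l)
          * pr P (fun c => c.x1 = u ∧ c.x2 = u ∧ c.x3 = x3 ∧ c.y = y))
    (hA : ∀ (l a : Bool) (y : Fin (N + 1)),
      pr P (fun c => c.lam = l ∧ g c = a ∧ c.x1 = u ∧ c.x2 = u ∧ c.x3 = x3 ∧ c.y = y)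
          * pr P (fun c => c.x1 = u ∧ c.x2 = u ∧ c.x3 = x3)
        = pr P (fun c => c.lam = l ∧ g c = a ∧ c.x1 = u ∧ c.x2 = u ∧ c.x3 = x3)
          * pr P (fun c => c.x1 = u ∧ c.x2 = u ∧ c.x3 = x3 ∧ c.y = y))
    (hB : ∀ (l b : Bool) (y : Fin (N + 1)),
      pr P (fun c => c.lam = l ∧ c.b = b ∧ c.x1 = u ∧ c.x2 = u ∧ c.x3 = x3 ∧ c.y = y)
          * pr P (fun c => c.y = y)
        = pr P (fun c => c.lam = l ∧ c.b = b ∧ c.y = y)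
          * pr P (fun c => c.x1 = u ∧ c.x2 = u ∧ c.x3 = x3 ∧ c.y = y)) :
    (∀ (l : Bool) (y : Fin (N + 1)), Rlam P l x3 y = pr P (fun c => c.lam = l)) ∧
    (∀ (a l : Bool) (y : Fin (N + 1)), Ralam P a l x3 y
        = pr P (fun c => c.lam = l ∧ g c = a ∧ c.x1 = u ∧ c.x2 = u ∧ c.x3 = x3)
          / pr P (fun c => c.x1 = u ∧ c.x2 = u ∧ c.x3 = x3)) ∧
    (∀ (b l : Bool) (y : Fin (N + 1)), Rblam P b l x3 y
        = pr P (fun c => c.lam = l ∧ c.b = b ∧ c.y = y) / pr P (fun c => c.y = y)) := by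
  have hDx : 0 < pr P (fun c => c.x1 = u ∧ c.x2 = u ∧ c.x3 = x3) :=
    lt_of_lt_of_le (hin 0) (pr_mono P hnn _ _ fun c hc => ⟨hc.1, hc.2.1, hc.2.2.1⟩)
  have hDy : ∀ y : Fin (N + 1), 0 < pr P (fun c => c.y = y) := fun y =>
    lt_of_lt_of_le (hin y) (pr_mono P hnn _ _ fun c hc => hc.2.2.2)
  refine ⟨?_, ?_, ?_⟩
  · intro l y
    have e : Rlam P l x3 y = ∑ a : Bool, ∑ b : Bool,
        cpr P (fun c => g c = a ∧ c.b = b ∧ c.lam = l)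
          (fun c => c.x1 = u ∧ c.x2 = u ∧ c.x3 = x3 ∧ c.y = y) :=
      Finset.sum_congr rfl fun a _ => Finset.sum_congr rfl fun b _ => hR a b l y
    rw [e, cpr_sum_ab, hfree l y, mul_div_assoc, div_self (ne_of_gt (hin y)), mul_one]
  · intro a l y
    have e : Ralam P a l x3 y = ∑ b : Bool,
        cpr P (fun c => g c = a ∧ c.b = b ∧ c.lam = l)
          (fun c => c.x1 = u ∧ c.x2 = u ∧ c.x3 = x3 ∧ c.y = y) :=
      Finset.sum_congr rfl fun b _ => hR a b l y
    rw [e, cpr_sum_b, div_eq_div_iff (hin y).ne' hDx.ne']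
    exact hA l a y
  · intro b l y
    have e : Rblam P b l x3 y = ∑ a : Bool,
        cpr P (fun c => g c = a ∧ c.b = b ∧ c.lam = l)
          (fun c => c.x1 = u ∧ c.x2 = u ∧ c.x3 = x3 ∧ c.y = y) :=
      Finset.sum_congr rfl fun a _ => hR a b l y
    rw [e, cpr_sum_a, div_eq_div_iff (hin y).ne' (hDy y).ne']
    exact hB l b y

end Helpers

/-- Under free choice and relativistic causality, the conditional
distribution `R_P` satisfies measurement independence and parameter independence. -/
theorem stmt10 (N : ℕ) (hN : 1 ≤ N) (P : Cfg N → ℝ)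
    -- `P` is a probability distribution
    (hnn : ∀ c, 0 ≤ P c)
    (hsum : (∑ c : Cfg N, P c) = 1)
    -- (i) all inputs have positive probability
    (hin : ∀ (x1v x2v : Bool) (x3v yv : Fin (N + 1)),
      0 < pr P (fun c => c.x1 = x1v ∧ c.x2 = x2v ∧ c.x3 = x3v ∧ c.y = yv))
    -- (ii) `λ ⫫ (x1, x2, x3, y)`
    (hfree : ∀ (lv x1v x2v : Bool) (x3v yv : Fin (N + 1)),
      pr P (fun c => c.lam = lv ∧ c.x1 = x1v ∧ c.x2 = x2v ∧ c.x3 = x3v ∧ c.y = yv)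
        = pr P (fun c => c.lam = lv)
          * pr P (fun c => c.x1 = x1v ∧ c.x2 = x2v ∧ c.x3 = x3v ∧ c.y = yv))
    -- (iii) `(λ, b) ⫫ (x1, x2, x3) | y`
    (hRC1 : ∀ (lv bv x1v x2v : Bool) (x3v yv : Fin (N + 1)),
      pr P (fun c => c.lam = lv ∧ c.b = bv ∧
            c.x1 = x1v ∧ c.x2 = x2v ∧ c.x3 = x3v ∧ c.y = yv)
          * pr P (fun c => c.y = yv)
        = pr P (fun c => c.lam = lv ∧ c.b = bv ∧ c.y = yv)
          * pr P (fun c => c.x1 = x1v ∧ c.x2 = x2v ∧ c.x3 = x3v ∧ c.y = yv))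
    -- `(λ, a1, a2, a3) ⫫ y | (x1, x2, x3)`
    (hRC2 : ∀ (lv a1v a2v a3v x1v x2v : Bool) (x3v yv : Fin (N + 1)),
      pr P (fun c => c.lam = lv ∧ c.a1 = a1v ∧ c.a2 = a2v ∧ c.a3 = a3v ∧
            c.x1 = x1v ∧ c.x2 = x2v ∧ c.x3 = x3v ∧ c.y = yv)
          * pr P (fun c => c.x1 = x1v ∧ c.x2 = x2v ∧ c.x3 = x3v)
        = pr P (fun c => c.lam = lv ∧ c.a1 = a1v ∧ c.a2 = a2v ∧ c.a3 = a3v ∧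
            c.x1 = x1v ∧ c.x2 = x2v ∧ c.x3 = x3v)
          * pr P (fun c => c.x1 = x1v ∧ c.x2 = x2v ∧ c.x3 = x3v ∧ c.y = yv))
    -- `(λ, a1, a2) ⫫ (x3, y) | (x1, x2)`
    (hRC3 : ∀ (lv a1v a2v x1v x2v : Bool) (x3v yv : Fin (N + 1)),
      pr P (fun c => c.lam = lv ∧ c.a1 = a1v ∧ c.a2 = a2v ∧
            c.x1 = x1v ∧ c.x2 = x2v ∧ c.x3 = x3v ∧ c.y = yv)
          * pr P (fun c => c.x1 = x1v ∧ c.x2 = x2v)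
        = pr P (fun c => c.lam = lv ∧ c.a1 = a1v ∧ c.a2 = a2v ∧
            c.x1 = x1v ∧ c.x2 = x2v)
          * pr P (fun c => c.x1 = x1v ∧ c.x2 = x2v ∧ c.x3 = x3v ∧ c.y = yv)) :
    -- measurement independence: `R_P(λ | x3, y)` is the same for all inputs
    (∀ (l : Bool) (x3 y x3' y' : Fin (N + 1)),
      Rlam P l x3 y = Rlam P l x3' y') ∧
    -- parameter independence: `R_P(a | x3, y, λ)` does not depend on `y`
    (∀ (a l : Bool) (x3 y y' : Fin (N + 1)),
      Ralam P a l x3 y / Rlam P l x3 y = Ralam P a l x3 y' / Rlam P l x3 y') ∧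
    -- parameter independence: `R_P(b | x3, y, λ)` does not depend on `x3`
    (∀ (b l : Bool) (y x3 x3' : Fin (N + 1)),
      Rblam P b l x3 y / Rlam P l x3 y = Rblam P b l x3' y / Rlam P l x3' y) := by
  classical
  -- marginalization of hRC2 over a2, a3 (keeping a1)
  have hA1 : ∀ (l a : Bool) (x3 y : Fin (N + 1)),
      pr P (fun c => c.lam = l ∧ c.a1 = a ∧ c.x1 = true ∧ c.x2 = true ∧ c.x3 = x3 ∧ c.y = y)
          * pr P (fun c => c.x1 = true ∧ c.x2 = true ∧ c.x3 = x3)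
        = pr P (fun c => c.lam = l ∧ c.a1 = a ∧ c.x1 = true ∧ c.x2 = true ∧ c.x3 = x3)
          * pr P (fun c => c.x1 = true ∧ c.x2 = true ∧ c.x3 = x3 ∧ c.y = y) := by
    intro l a x3 y
    have step1 : ∀ a2v : Bool,
        pr P (fun c => c.lam = l ∧ c.a1 = a ∧ c.a2 = a2v ∧ c.x1 = true ∧ c.x2 = true ∧ c.x3 = x3 ∧ c.y = y)
            * pr P (fun c => c.x1 = true ∧ c.x2 = true ∧ c.x3 = x3)
          = pr P (fun c => c.lam = l ∧ c.a1 = a ∧ c.a2 = a2v ∧ c.x1 = true ∧ c.x2 = true ∧ c.x3 = x3)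
            * pr P (fun c => c.x1 = true ∧ c.x2 = true ∧ c.x3 = x3 ∧ c.y = y) := by
      intro a2v
      have hL := pr_sum_bool P (fun c => c.a3)
        (fun v c => c.lam = l ∧ c.a1 = a ∧ c.a2 = a2v ∧ c.a3 = v ∧ c.x1 = true ∧ c.x2 = true ∧ c.x3 = x3 ∧ c.y = y)
        (fun c => c.lam = l ∧ c.a1 = a ∧ c.a2 = a2v ∧ c.x1 = true ∧ c.x2 = true ∧ c.x3 = x3 ∧ c.y = y)
        (fun v c => by tauto)
      have hRr := pr_sum_bool P (fun c => c.a3)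
        (fun v c => c.lam = l ∧ c.a1 = a ∧ c.a2 = a2v ∧ c.a3 = v ∧ c.x1 = true ∧ c.x2 = true ∧ c.x3 = x3)
        (fun c => c.lam = l ∧ c.a1 = a ∧ c.a2 = a2v ∧ c.x1 = true ∧ c.x2 = true ∧ c.x3 = x3)
        (fun v c => by tauto)
      rw [← hL, ← hRr, Finset.sum_mul, Finset.sum_mul]
      exact Finset.sum_congr rfl fun v _ => hRC2 l a a2v v true true x3 y
    have hL := pr_sum_bool P (fun c => c.a2)
      (fun v c => c.lam = l ∧ c.a1 = a ∧ c.a2 = v ∧ c.x1 = true ∧ c.x2 = true ∧ c.x3 = x3 ∧ c.y = y)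
      (fun c => c.lam = l ∧ c.a1 = a ∧ c.x1 = true ∧ c.x2 = true ∧ c.x3 = x3 ∧ c.y = y)
      (fun v c => by tauto)
    have hRr := pr_sum_bool P (fun c => c.a2)
      (fun v c => c.lam = l ∧ c.a1 = a ∧ c.a2 = v ∧ c.x1 = true ∧ c.x2 = true ∧ c.x3 = x3)
      (fun c => c.lam = l ∧ c.a1 = a ∧ c.x1 = true ∧ c.x2 = true ∧ c.x3 = x3)
      (fun v c => by tauto)
    rw [← hL, ← hRr, Finset.sum_mul, Finset.sum_mul]
    exact Finset.sum_congr rfl fun v _ => step1 v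
  -- marginalization of hRC2 over a1, a2 (keeping a3)
  have hA3 : ∀ (l a : Bool) (x3 y : Fin (N + 1)),
      pr P (fun c => c.lam = l ∧ c.a3 = a ∧ c.x1 = false ∧ c.x2 = false ∧ c.x3 = x3 ∧ c.y = y)
          * pr P (fun c => c.x1 = false ∧ c.x2 = false ∧ c.x3 = x3)
        = pr P (fun c => c.lam = l ∧ c.a3 = a ∧ c.x1 = false ∧ c.x2 = false ∧ c.x3 = x3)
          * pr P (fun c => c.x1 = false ∧ c.x2 = false ∧ c.x3 = x3 ∧ c.y = y) := by
    intro l a x3 y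
    have step1 : ∀ a1v : Bool,
        pr P (fun c => c.lam = l ∧ c.a1 = a1v ∧ c.a3 = a ∧ c.x1 = false ∧ c.x2 = false ∧ c.x3 = x3 ∧ c.y = y)
            * pr P (fun c => c.x1 = false ∧ c.x2 = false ∧ c.x3 = x3)
          = pr P (fun c => c.lam = l ∧ c.a1 = a1v ∧ c.a3 = a ∧ c.x1 = false ∧ c.x2 = false ∧ c.x3 = x3)
            * pr P (fun c => c.x1 = false ∧ c.x2 = false ∧ c.x3 = x3 ∧ c.y = y) := by
      intro a1v
      have hL := pr_sum_bool P (fun c => c.a2)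
        (fun v c => c.lam = l ∧ c.a1 = a1v ∧ c.a2 = v ∧ c.a3 = a ∧ c.x1 = false ∧ c.x2 = false ∧ c.x3 = x3 ∧ c.y = y)
        (fun c => c.lam = l ∧ c.a1 = a1v ∧ c.a3 = a ∧ c.x1 = false ∧ c.x2 = false ∧ c.x3 = x3 ∧ c.y = y)
        (fun v c => by tauto)
      have hRr := pr_sum_bool P (fun c => c.a2)
        (fun v c => c.lam = l ∧ c.a1 = a1v ∧ c.a2 = v ∧ c.a3 = a ∧ c.x1 = false ∧ c.x2 = false ∧ c.x3 = x3)
        (fun c => c.lam = l ∧ c.a1 = a1v ∧ c.a3 = a ∧ c.x1 = false ∧ c.x2 = false ∧ c.x3 = x3)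
        (fun v c => by tauto)
      rw [← hL, ← hRr, Finset.sum_mul, Finset.sum_mul]
      exact Finset.sum_congr rfl fun v _ => hRC2 l a1v v a false false x3 y
    have hL := pr_sum_bool P (fun c => c.a1)
      (fun v c => c.lam = l ∧ c.a1 = v ∧ c.a3 = a ∧ c.x1 = false ∧ c.x2 = false ∧ c.x3 = x3 ∧ c.y = y)
      (fun c => c.lam = l ∧ c.a3 = a ∧ c.x1 = false ∧ c.x2 = false ∧ c.x3 = x3 ∧ c.y = y)
      (fun v c => by tauto)
    have hRr := pr_sum_bool P (fun c => c.a1)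
      (fun v c => c.lam = l ∧ c.a1 = v ∧ c.a3 = a ∧ c.x1 = false ∧ c.x2 = false ∧ c.x3 = x3)
      (fun c => c.lam = l ∧ c.a3 = a ∧ c.x1 = false ∧ c.x2 = false ∧ c.x3 = x3)
      (fun v c => by tauto)
    rw [← hL, ← hRr, Finset.sum_mul, Finset.sum_mul]
    exact Finset.sum_congr rfl fun v _ => step1 v
  have key : ∀ x3 : Fin (N + 1),
      (∀ (l : Bool) (y : Fin (N + 1)), Rlam P l x3 y = pr P (fun c => c.lam = l)) ∧
      (∀ (a l : Bool) (y y' : Fin (N + 1)), Ralam P a l x3 y = Ralam P a l x3 y') ∧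
      (∀ (b l : Bool) (y : Fin (N + 1)), Rblam P b l x3 y
          = pr P (fun c => c.lam = l ∧ c.b = b ∧ c.y = y) / pr P (fun c => c.y = y)) := by
    intro x3
    by_cases h0 : x3 = 0
    · obtain ⟨h1, h2, h3⟩ := aux_branch P hnn (fun c => c.a1) true x3
        (fun a b l y => by unfold R; rw [if_pos h0])
        (fun y => hin true true x3 y) (fun l y => hfree l true true x3 y)
        (fun l a y => hA1 l a x3 y) (fun l b y => hRC1 l b true true x3 y)
      exact ⟨h1, fun a l y y' => by rw [h2 a l y, h2 a l y'], h3⟩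
    · obtain ⟨h1, h2, h3⟩ := aux_branch P hnn (fun c => c.a3) false x3
        (fun a b l y => by unfold R; rw [if_neg h0])
        (fun y => hin false false x3 y) (fun l y => hfree l false false x3 y)
        (fun l a y => hA3 l a x3 y) (fun l b y => hRC1 l b false false x3 y)
      exact ⟨h1, fun a l y y' => by rw [h2 a l y, h2 a l y'], h3⟩
  refine ⟨fun l x3 y x3' y' => by rw [(key x3).1 l y, (key x3').1 l y'],
    fun a l x3 y y' => by rw [(key x3).2.1 a l y y', (key x3).1 l y, (key x3).1 l y'],
    fun b l y x3 x3' => by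
      rw [(key x3).2.2 b l y, (key x3').2.2 b l y, (key x3).1 l y, (key x3').1 l y]⟩
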